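/- Let d ≥ 2. Let h ∈ GL(d,ℝ), let α, β : Fin d → ℝ be positive and nonincreasing, and set a := diag(α) and b := diag(β). Then sin∠(e₁, h·e₁) ≤ (α 1 / β 0) · ‖h⁻¹‖ · ‖(a⁻¹·h·b)·e₁‖, where h·e₁ and (a⁻¹·h·b)·e₁ denote the indicated matrices applied to the vector e₁. -/

import Mathlib

/-!
Write `v = h e₁` and `w = (a⁻¹ h b) e₁`, so that `v i = h i 0` and `w i = β 0 * v i / α i`.
For the unit vector `e₁`, `sin∠(e₁, v) ‖v‖` is the distance from `v` to the line `ℝ e₁`, hence at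
most the norm of `v` with its first coordinate removed. For `i ≥ 1` monotonicity of `α` gives
`|v i| = (α i / β 0) |w i| ≤ (α 1 / β 0) |w i|`, and `1 = ‖h⁻¹ v‖ ≤ ‖h⁻¹‖ ‖v‖` absorbs the
remaining factor `‖v‖`.
-/

open Matrix

/-- The operator norm of a `d × d` real matrix acting on Euclidean `ℝ^d`. -/
noncomputable def opNorm {d : ℕ} (M : Matrix (Fin d) (Fin d) ℝ) : ℝ :=
  ‖LinearMap.toContinuousLinearMap (Matrix.toEuclideanLin M)‖

/-- The action of a `d × d` real matrix on Euclidean `ℝ^d`. -/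
noncomputable def appE {d : ℕ} (M : Matrix (Fin d) (Fin d) ℝ)
    (v : EuclideanSpace ℝ (Fin d)) : EuclideanSpace ℝ (Fin d) :=
  Matrix.toEuclideanLin M v

/-- The sine of the angle between two vectors of Euclidean `ℝ^d`. -/
noncomputable def sinAngle {d : ℕ} (u v : EuclideanSpace ℝ (Fin d)) : ℝ :=
  Real.sin (InnerProductGeometry.angle u v)

/-- The first standard basis vector of Euclidean `ℝ^d`. -/
noncomputable def e1 {d : ℕ} (h : 0 < d) : EuclideanSpace ℝ (Fin d) :=
  EuclideanSpace.single ⟨0, h⟩ 1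

open InnerProductGeometry
open scoped RealInnerProductSpace

theorem EuclideanSpace.norm_le_norm_of_forall_abs_le {ι : Type*} [Fintype ι]
    {x y : EuclideanSpace ℝ ι} (h : ∀ i, |x i| ≤ |y i|) : ‖x‖ ≤ ‖y‖ := by
  simp only [EuclideanSpace.norm_eq, Real.norm_eq_abs]
  exact Real.sqrt_le_sqrt (Finset.sum_le_sum fun i _ => pow_le_pow_left₀ (abs_nonneg _) (h i) 2)

theorem sin_angle_mul_norm_le_norm_sub_smul {V : Type*} [NormedAddCommGroup V]
    [InnerProductSpace ℝ V] {u : V} (hu : ‖u‖ = 1) (v : V) (c : ℝ) :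
    Real.sin (angle u v) * ‖v‖ ≤ ‖v - c • u‖ := by
  have hsin := sin_angle_mul_norm_mul_norm u v
  rw [hu, one_mul, real_inner_self_eq_norm_sq, real_inner_self_eq_norm_sq, hu] at hsin
  have hexpand : ‖v - c • u‖ ^ 2 = ‖v‖ ^ 2 - 2 * c * ⟪u, v⟫ + c ^ 2 := by
    rw [norm_sub_sq_real, inner_smul_right, norm_smul, hu, real_inner_comm, Real.norm_eq_abs,
      mul_one, sq_abs]
    ring
  rw [hsin, Real.sqrt_le_iff]
  exact ⟨norm_nonneg _, by nlinarith [sq_nonneg (c - ⟪u, v⟫)]⟩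

theorem norm_e1 {d : ℕ} (hd : 0 < d) : ‖e1 hd‖ = 1 := by
  simp [e1]

theorem appE_e1_apply {d : ℕ} (hd : 0 < d) (M : Matrix (Fin d) (Fin d) ℝ) (i : Fin d) :
    appE M (e1 hd) i = M i ⟨0, hd⟩ := by
  simp [appE, e1, toLpLin_apply, mulVec_single]

theorem norm_le_opNorm_inv_mul_norm_appE {d : ℕ} {M : Matrix (Fin d) (Fin d) ℝ}
    (hM : IsUnit M.det) (x : EuclideanSpace ℝ (Fin d)) :
    ‖x‖ ≤ opNorm M⁻¹ * ‖appE M x‖ := by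
  have hinv : appE M⁻¹ (appE M x) = x := by
    simp [appE, toLpLin_apply, mulVec_mulVec, nonsing_inv_mul M hM]
  calc ‖x‖ = ‖appE M⁻¹ (appE M x)‖ := by rw [hinv]
    _ ≤ opNorm M⁻¹ * ‖appE M x‖ :=
      (LinearMap.toContinuousLinearMap (toEuclideanLin M⁻¹)).le_opNorm _

theorem sinAngle_e1_mul_norm_le {d : ℕ} (hd : 0 < d) {v w : EuclideanSpace ℝ (Fin d)}
    {c : ℝ} (hc : 0 ≤ c) (hvw : ∀ i, i ≠ ⟨0, hd⟩ → |v i| ≤ c * |w i|) :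
    sinAngle (e1 hd) v * ‖v‖ ≤ c * ‖w‖ := by
  have hcoord : ∀ i, |(v - v ⟨0, hd⟩ • e1 hd) i| ≤ |(c • w) i| := by
    intro i
    rw [PiLp.smul_apply, smul_eq_mul, abs_mul, abs_of_nonneg hc]
    by_cases hi : i = ⟨0, hd⟩
    · subst hi
      simpa [e1] using mul_nonneg hc (abs_nonneg _)
    · simpa [e1, hi] using hvw i hi
  calc sinAngle (e1 hd) v * ‖v‖ ≤ ‖v - v ⟨0, hd⟩ • e1 hd‖ :=
        sin_angle_mul_norm_le_norm_sub_smul (norm_e1 hd) v _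
    _ ≤ ‖c • w‖ := EuclideanSpace.norm_le_norm_of_forall_abs_le hcoord
    _ = c * ‖w‖ := by rw [norm_smul, Real.norm_of_nonneg hc]

theorem inv_diagonal_mul_mul_diagonal_apply {n : Type*} [Fintype n] [DecidableEq n]
    {α : n → ℝ} (hα : ∀ i, α i ≠ 0) (β : n → ℝ) (M : Matrix n n ℝ) (i j : n) :
    ((diagonal α)⁻¹ * M * diagonal β) i j = (α i)⁻¹ * M i j * β j := by
  have hinv : Ring.inverse α i = (α i)⁻¹ :=
    eq_inv_of_mul_eq_one_left <|
      congrFun (Ring.inverse_mul_cancel α (Pi.isUnit_iff.mpr fun i => (hα i).isUnit)) i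
  rw [inv_diagonal, mul_diagonal, diagonal_mul, hinv]

theorem abs_apply_le_div_mul_abs_inv_diagonal_mul_mul_diagonal_apply {n : Type*} [Fintype n]
    [DecidableEq n] {α β : n → ℝ} (hα : ∀ i, 0 < α i) {i j k : n} (hβ : 0 < β j)
    (hik : α i ≤ α k) (M : Matrix n n ℝ) :
    |M i j| ≤ α k / β j * |((diagonal α)⁻¹ * M * diagonal β) i j| := by
  rw [inv_diagonal_mul_mul_diagonal_apply (fun l => (hα l).ne'), abs_mul, abs_mul, abs_inv,
    abs_of_pos (hα i), abs_of_pos hβ]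
  calc |M i j| ≤ α k / α i * |M i j| :=
        le_mul_of_one_le_left (abs_nonneg _) ((one_le_div (hα i)).mpr hik)
    _ = α k / β j * ((α i)⁻¹ * |M i j| * β j) := by
        have := (hα i).ne'
        have := hβ.ne'
        field_simp

/-- The basic angle estimate: for `h ∈ GL(d,ℝ)` and positive nonincreasing `α, β` with
`a = diag(α)`, `b = diag(β)`, one has
`sin∠(e₁, h·e₁) ≤ (α 1 / β 0) · ‖h⁻¹‖ · ‖(a⁻¹·h·b)·e₁‖`. -/
theorem stmt6 (d : ℕ) (hd : 2 ≤ d) (h : Matrix (Fin d) (Fin d) ℝ) (hh : IsUnit h.det)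
    (α β : Fin d → ℝ) (hα : ∀ i, 0 < α i) (hβ : ∀ i, 0 < β i)
    (hα' : Antitone α) :
    sinAngle (e1 (by omega)) (appE h (e1 (by omega)))
      ≤ (α ⟨1, by omega⟩ / β ⟨0, by omega⟩) * opNorm h⁻¹ *
        ‖appE ((Matrix.diagonal α)⁻¹ * h * Matrix.diagonal β) (e1 (by omega))‖ := by
  have hd0 : 0 < d := by omega
  set c := α ⟨1, by omega⟩ / β ⟨0, hd0⟩
  have hoff : ∀ i, i ≠ ⟨0, hd0⟩ → |appE h (e1 hd0) i|
      ≤ c * |appE ((diagonal α)⁻¹ * h * diagonal β) (e1 hd0) i| := by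
    intro i hi
    rw [appE_e1_apply, appE_e1_apply]
    refine abs_apply_le_div_mul_abs_inv_diagonal_mul_mul_diagonal_apply hα (hβ _) (hα' ?_) h
    exact Fin.le_def.mpr (Nat.one_le_iff_ne_zero.mpr fun h0 => hi (Fin.ext h0))
  have hsin := sinAngle_e1_mul_norm_le hd0 (div_nonneg (hα _).le (hβ _).le) hoff
  have hlower := norm_le_opNorm_inv_mul_norm_appE hh (e1 hd0)
  rw [norm_e1] at hlower
  calc sinAngle (e1 hd0) (appE h (e1 hd0))
      ≤ sinAngle (e1 hd0) (appE h (e1 hd0)) * (opNorm h⁻¹ * ‖appE h (e1 hd0)‖) :=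
        le_mul_of_one_le_right (sin_angle_nonneg _ _) hlower
    _ = opNorm h⁻¹ * (sinAngle (e1 hd0) (appE h (e1 hd0)) * ‖appE h (e1 hd0)‖) := by ring
    _ ≤ opNorm h⁻¹ * (c * ‖appE ((diagonal α)⁻¹ * h * diagonal β) (e1 hd0)‖) :=
        mul_le_mul_of_nonneg_left hsin (norm_nonneg _)
    _ = c * opNorm h⁻¹ * ‖appE ((diagonal α)⁻¹ * h * diagonal β) (e1 hd0)‖ := by ring
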